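/- Let c ∈ ℂ, f(x,y) = |∑_{i=1}^n x_i y_i − c|² and ρ(x,y) = ‖x‖² + ‖y‖² on ℂⁿ × ℂⁿ regarded as a real inner product space. If (x,y) satisfies ∑_i x_i y_i ≠ c (so f(x,y) > 0), then the function ρ + √f is differentiable at (x,y) and ⟨grad(ρ + √f)(x,y), grad f(x,y)⟩ ≥ 8 f(x,y) + 2 √(f(x,y)) (ρ(x,y) − 4|c|). In particular, along the negative gradient flow of f, the quantity ρ + √f is nonincreasing at any time when ρ ≥ 4|c| and f > 0. -/

import Mathlib

/-!
Write `μ = ∑ xᵢ yᵢ - c`. The gradient of `f = |μ|²` is `G = 2μ (ȳ, x̄)`, so `‖G‖² = 4|μ|² ρ`, and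
since `∑ xᵢ yᵢ` is quadratic, Euler's identity gives `⟪(x, y), G⟫ = 4|μ|² + 4 Re (μ c̄)`. As
`grad (ρ + √f) = 2 (x, y) + G / (2|μ|)`, its inner product with `G` is
`8|μ|² + 8 Re (μ c̄) + 2|μ| ρ ≥ 8 f + 2 √f (ρ - 4|c|)`. Along `γ' = -G` the derivative of
`ρ + √f` is minus this inner product.
-/

noncomputable section

open scoped RealInnerProductSpace

abbrev HypVS (n : ℕ) : Type :=
  WithLp 2 (EuclideanSpace ℂ (Fin n) × EuclideanSpace ℂ (Fin n))

def xPart {n : ℕ} (p : HypVS n) : EuclideanSpace ℂ (Fin n) :=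
  (WithLp.equiv 2 (EuclideanSpace ℂ (Fin n) × EuclideanSpace ℂ (Fin n)) p).1

def yPart {n : ℕ} (p : HypVS n) : EuclideanSpace ℂ (Fin n) :=
  (WithLp.equiv 2 (EuclideanSpace ℂ (Fin n) × EuclideanSpace ℂ (Fin n)) p).2

def muC {n : ℕ} (c : ℂ) (p : HypVS n) : ℂ :=
  (∑ i, xPart p i * yPart p i) - c

section Gradient

variable {F : Type*} [NormedAddCommGroup F] [InnerProductSpace ℝ F] [CompleteSpace F]
  {f g : F → ℝ} {f' g' x : F}

theorem HasGradientAt.add (hf : HasGradientAt f f' x) (hg : HasGradientAt g g' x) :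
    HasGradientAt (fun y => f y + g y) (f' + g') x := by
  rw [hasGradientAt_iff_hasFDerivAt, map_add]
  exact HasFDerivAt.add hf hg

theorem HasGradientAt.sqrt (hf : HasGradientAt f f' x) (hx : f x ≠ 0) :
    HasGradientAt (fun y => √(f y)) ((2 * √(f x))⁻¹ • f') x := by
  rw [hasGradientAt_iff_hasFDerivAt, map_smul, ← one_div]
  exact HasFDerivAt.sqrt hf hx

theorem hasGradientAt_norm_sq (x : F) : HasGradientAt (fun y => ‖y‖ ^ 2) ((2 : ℝ) • x) x := by
  refine (hasStrictFDerivAt_norm_sq x).hasFDerivAt.congr_fderiv ?_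
  ext v
  simp

theorem HasFDerivAt.hasGradientAt_norm_sq {E : Type*} [NormedAddCommGroup E]
    [InnerProductSpace ℝ E] {μ : F → E} {D : F →L[ℝ] E} (hμ : HasFDerivAt μ D x) {G : F}
    (hG : ∀ v, ⟪G, v⟫ = 2 * ⟪μ x, D v⟫) :
    HasGradientAt (fun y => ‖μ y‖ ^ 2) G x := by
  refine hμ.norm_sq.congr_fderiv ?_
  ext v
  simp [hG]

theorem HasGradientAt.hasDerivAt_comp {γ : ℝ → F} {γ' : F} {t : ℝ}
    (hf : HasGradientAt f f' (γ t)) (hγ : HasDerivAt γ γ' t) :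
    HasDerivAt (fun s => f (γ s)) ⟪f', γ'⟫ t :=
  HasFDerivAt.comp_hasDerivAt t hf hγ

end Gradient

open ComplexConjugate

namespace HypVS

variable {n : ℕ}

theorem norm_sq_eq (q : HypVS n) : ‖q‖ ^ 2 = ‖xPart q‖ ^ 2 + ‖yPart q‖ ^ 2 :=
  WithLp.prod_norm_sq_eq_of_L2 q

theorem inner_eq (p q : HypVS n) :
    ⟪p, q⟫ = ∑ i, (⟪xPart p i, xPart q i⟫ + ⟪yPart p i, yPart q i⟫) := by
  rw [WithLp.prod_inner_apply, PiLp.inner_apply, PiLp.inner_apply, ← Finset.sum_add_distrib]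
  rfl

def xCoord (i : Fin n) : HypVS n →L[ℝ] ℂ :=
  ((EuclideanSpace.proj i).comp ((ContinuousLinearMap.fst ℂ _ _).comp
    (WithLp.prodContinuousLinearEquiv 2 ℂ _ _).toContinuousLinearMap)).restrictScalars ℝ

def yCoord (i : Fin n) : HypVS n →L[ℝ] ℂ :=
  ((EuclideanSpace.proj i).comp ((ContinuousLinearMap.snd ℂ _ _).comp
    (WithLp.prodContinuousLinearEquiv 2 ℂ _ _).toContinuousLinearMap)).restrictScalars ℝ

@[simp] theorem xCoord_apply (i : Fin n) (q : HypVS n) : xCoord i q = xPart q i := rfl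

@[simp] theorem yCoord_apply (i : Fin n) (q : HypVS n) : yCoord i q = yPart q i := rfl

def fderivMuC (q : HypVS n) : HypVS n →L[ℝ] ℂ :=
  ∑ i, (xPart q i • yCoord i + yPart q i • xCoord i)

theorem fderivMuC_apply (q v : HypVS n) :
    fderivMuC q v = ∑ i, (xPart q i * yPart v i + yPart q i * xPart v i) := by
  simp [fderivMuC]

theorem hasFDerivAt_muC (c : ℂ) (q : HypVS n) : HasFDerivAt (muC c) (fderivMuC q) q := by
  have h : muC c = fun r : HypVS n => (∑ i, xCoord i r * yCoord i r) - c := rfl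
  rw [h]
  exact (HasFDerivAt.fun_sum fun i _ =>
    (xCoord i).hasFDerivAt.mul (yCoord i).hasFDerivAt).sub_const c

theorem fderivMuC_self (c : ℂ) (q : HypVS n) : fderivMuC q q = 2 * (muC c q + c) := by
  simp only [fderivMuC_apply, muC, sub_add_cancel, Finset.mul_sum]
  exact Finset.sum_congr rfl fun i _ => by ring

def gradNormSqMuC (c : ℂ) (q : HypVS n) : HypVS n :=
  WithLp.toLp 2 (WithLp.toLp 2 fun i => 2 * muC c q * conj (yPart q i),
    WithLp.toLp 2 fun i => 2 * muC c q * conj (xPart q i))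

@[simp] theorem xPart_gradNormSqMuC (c : ℂ) (q : HypVS n) (i : Fin n) :
    xPart (gradNormSqMuC c q) i = 2 * muC c q * conj (yPart q i) := rfl

@[simp] theorem yPart_gradNormSqMuC (c : ℂ) (q : HypVS n) (i : Fin n) :
    yPart (gradNormSqMuC c q) i = 2 * muC c q * conj (xPart q i) := rfl

theorem inner_gradNormSqMuC (c : ℂ) (q v : HypVS n) :
    ⟪gradNormSqMuC c q, v⟫ = 2 * ⟪muC c q, fderivMuC q v⟫ := by
  simp only [inner_eq, fderivMuC_apply, Complex.inner, xPart_gradNormSqMuC, yPart_gradNormSqMuC,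
    map_mul, Complex.conj_conj, map_ofNat, ← Complex.add_re, ← Complex.re_sum]
  rw [← Complex.re_ofReal_mul, Finset.sum_mul, Finset.mul_sum]
  congr 1
  refine Finset.sum_congr rfl fun i _ => ?_
  push_cast
  ring

theorem hasGradientAt_norm_sq_muC (c : ℂ) (q : HypVS n) :
    HasGradientAt (fun r => ‖muC c r‖ ^ 2) (gradNormSqMuC c q) q :=
  (hasFDerivAt_muC c q).hasGradientAt_norm_sq (inner_gradNormSqMuC c q)

theorem norm_gradNormSqMuC_sq (c : ℂ) (q : HypVS n) :
    ‖gradNormSqMuC c q‖ ^ 2 = 4 * ‖muC c q‖ ^ 2 * ‖q‖ ^ 2 := by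
  simp only [norm_sq_eq, EuclideanSpace.norm_sq_eq, xPart_gradNormSqMuC, yPart_gradNormSqMuC,
    norm_mul, Complex.norm_conj, mul_pow, ← Finset.mul_sum]
  norm_num
  ring

theorem inner_gradNormSqMuC_at_self (c : ℂ) (q : HypVS n) :
    ⟪q, gradNormSqMuC c q⟫ = 4 * ‖muC c q‖ ^ 2 + 4 * ⟪muC c q, c⟫ := by
  have h : 2 * (muC c q + c) = (2 : ℝ) • muC c q + (2 : ℝ) • c := by
    simp [Complex.real_smul, mul_add]
  rw [real_inner_comm, inner_gradNormSqMuC, fderivMuC_self c, h, inner_add_right,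
    real_inner_smul_right, real_inner_smul_right, real_inner_self_eq_norm_sq]
  ring

theorem hasGradientAt_lyapunov {c : ℂ} {q : HypVS n} (hq : muC c q ≠ 0) :
    HasGradientAt (fun r => ‖r‖ ^ 2 + √(‖muC c r‖ ^ 2))
      ((2 : ℝ) • q + (2 * √(‖muC c q‖ ^ 2))⁻¹ • gradNormSqMuC c q) q :=
  (hasGradientAt_norm_sq q).add
    ((hasGradientAt_norm_sq_muC c q).sqrt (pow_ne_zero 2 (norm_ne_zero_iff.mpr hq)))

theorem le_inner_gradient_lyapunov {c : ℂ} {q : HypVS n} (hq : muC c q ≠ 0) :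
    8 * ‖muC c q‖ ^ 2 + 2 * √(‖muC c q‖ ^ 2) * (‖q‖ ^ 2 - 4 * ‖c‖) ≤
      ⟪(2 : ℝ) • q + (2 * √(‖muC c q‖ ^ 2))⁻¹ • gradNormSqMuC c q, gradNormSqMuC c q⟫ := by
  have hμ : 0 < ‖muC c q‖ := norm_pos_iff.mpr hq
  have hc : -(‖muC c q‖ * ‖c‖) ≤ ⟪muC c q, c⟫ := neg_le_of_abs_le (abs_real_inner_le_norm _ _)
  rw [Real.sqrt_sq hμ.le, inner_add_left, real_inner_smul_left, real_inner_smul_left,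
    real_inner_self_eq_norm_sq, norm_gradNormSqMuC_sq, inner_gradNormSqMuC_at_self]
  have h : (2 * ‖muC c q‖)⁻¹ * (4 * ‖muC c q‖ ^ 2 * ‖q‖ ^ 2) = 2 * ‖muC c q‖ * ‖q‖ ^ 2 := by
    field_simp
    ring
  rw [h]
  linarith

end HypVS

open HypVS in
theorem stmt4 (n : ℕ) (c : ℂ) (f ρ : HypVS n → ℝ)
    (hf : ∀ p, f p = ‖muC c p‖ ^ 2)
    (hρ : ∀ p, ρ p = ‖xPart p‖ ^ 2 + ‖yPart p‖ ^ 2)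
    (p : HypVS n) (hp : (∑ i, xPart p i * yPart p i) ≠ c) :
    (DifferentiableAt ℝ (fun q => ρ q + Real.sqrt (f q)) p ∧
      8 * f p + 2 * Real.sqrt (f p) * (ρ p - 4 * ‖c‖) ≤
        ⟪gradient (fun q => ρ q + Real.sqrt (f q)) p, gradient f p⟫) ∧
    -- in particular, `ρ + √f` is nonincreasing along the negative gradient flow of `f`
    -- at any time when `ρ ≥ 4|c|` and `f > 0`
    ∀ (γ : ℝ → HypVS n) (t : ℝ), HasDerivAt γ (-(gradient f (γ t))) t →
      4 * ‖c‖ ≤ ρ (γ t) → 0 < f (γ t) →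
      deriv (fun s => ρ (γ s) + Real.sqrt (f (γ s))) t ≤ 0 := by
  obtain rfl : f = fun q => ‖muC c q‖ ^ 2 := funext hf
  obtain rfl : ρ = fun q => ‖q‖ ^ 2 := funext fun q => (hρ q).trans (norm_sq_eq q).symm
  have hp' : muC c p ≠ 0 := sub_ne_zero.mpr hp
  refine ⟨⟨(hasGradientAt_lyapunov hp').differentiableAt, ?_⟩, fun γ t hγ hρc hf_pos => ?_⟩
  · rw [(hasGradientAt_lyapunov hp').gradient, (hasGradientAt_norm_sq_muC c p).gradient]
    exact le_inner_gradient_lyapunov hp'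
  · have hγt : muC c (γ t) ≠ 0 := fun h => by simp [h] at hf_pos
    rw [(hasGradientAt_norm_sq_muC c _).gradient] at hγ
    rw [((hasGradientAt_lyapunov hγt).hasDerivAt_comp hγ).deriv, inner_neg_right, neg_nonpos]
    exact (add_nonneg (by positivity) (mul_nonneg (by positivity) (sub_nonneg.mpr hρc))).trans
      (le_inner_gradient_lyapunov hγt)
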